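/- For any evaluation context σ (a finite map from variables x_1,...,x_n to untagged values) and any untagged value v, the set ℓ(w(σ, v)) equals exactly the set of linear expressions that evaluate to v in the context σ, where w(σ, c(v_1,...,v_k)) is the tagged tree c^{{∘} ∪ {i | σ(x_i) = c(v_1,...,v_k)}}(w(σ,v_1), ..., w(σ,v_k)). -/

import Mathlib

/-- Linear expressions over `n` variables: trees built from variables `x i` and
constructor applications `c(e₁,...,e_k)` (constructors named by naturals). -/
inductive LinExpr (n : ℕ) : Type
  | var : Fin n → LinExpr n
  | cons : ℕ → List (LinExpr n) → LinExpr n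

/-- Tagged trees (ℓ-values): each node carries a constructor symbol and a tag,
a finite subset of `{∘, 1, ..., n}` modelled as `Finset (Option (Fin n))`
(`none` playing the role of `∘`). -/
inductive TaggedTree (n : ℕ) : Type
  | node : ℕ → Finset (Option (Fin n)) → List (TaggedTree n) → TaggedTree n

/-- Membership in the set `ℓ(w)` of linear expressions extracted from a tagged tree:
`ℓ(c^A(w₁,...,w_k)) = {x i | i ∈ A} ∪ ({c(e₁,...,e_k) | e_i ∈ ℓ(w_i)} if ∘ ∈ A else ∅)`. -/
inductive EllMem {n : ℕ} : LinExpr n → TaggedTree n → Prop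
  | var {i : Fin n} {c A ws} (hi : some i ∈ A) :
      EllMem (.var i) (.node c A ws)
  | cons {c A ws es} (hc : none ∈ A) (hes : List.Forall₂ EllMem es ws) :
      EllMem (.cons c es) (.node c A ws)

/-- The set `ℓ(w)` of linear expressions extracted from a tagged tree `w`. -/
def ell {n : ℕ} (w : TaggedTree n) : Set (LinExpr n) := {e | EllMem e w}
/-- Untagged values: finite trees of constructor applications. -/
inductive UVal : Type
  | node : ℕ → List UVal → UVal

mutual
/-- Evaluation of a linear expression in a context `σ` assigning values to variables:
each variable `x i` is replaced by `σ i`. -/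
def evalLin {n : ℕ} (σ : Fin n → UVal) : LinExpr n → UVal
  | .var i => σ i
  | .cons c es => .node c (evalLinList σ es)

/-- Pointwise evaluation of a list of linear expressions (i.e. `List.map (evalLin σ)`). -/
def evalLinList {n : ℕ} (σ : Fin n → UVal) : List (LinExpr n) → List UVal
  | [] => []
  | e :: es => evalLin σ e :: evalLinList σ es
end

mutual
/-- The tagging function `w(σ, v)`: the node `c(v₁,...,v_k)` receives the tag
`{∘} ∪ {i | σ(x i) = c(v₁,...,v_k)}` and the children are tagged recursively. -/
noncomputable def wTag {n : ℕ} (σ : Fin n → UVal) : UVal → TaggedTree n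
  | .node c vs =>
      .node c
        (open scoped Classical in
          insert none ((Finset.univ.filter (fun i : Fin n => σ i = UVal.node c vs)).image some))
        (wTagList σ vs)

/-- Pointwise tagging of a list of values (i.e. `List.map (wTag σ)`). -/
noncomputable def wTagList {n : ℕ} (σ : Fin n → UVal) : List UVal → List (TaggedTree n)
  | [] => []
  | v :: vs => wTag σ v :: wTagList σ vs
end

/-! Induction on `v`. A variable `x i` lies in `ℓ(w(σ, v))` iff `i` is in the root tag, i.e.
`σ i = v`; a term `c'(e₁,...,e_k)` does iff `c'` is the root constructor (`∘` is always tagged)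
and each `e_j` lies in `ℓ` of the `j`-th child, which by induction means `e_j` evaluates to `v_j`. -/

theorem List.forall₂_congr_of_mem_right {α β : Type*} {R S : α → β → Prop} :
    ∀ {l₁ : List α} {l₂ : List β}, (∀ a, ∀ b ∈ l₂, (R a b ↔ S a b)) →
      (List.Forall₂ R l₁ l₂ ↔ List.Forall₂ S l₁ l₂)
  | [], [], _ => by simp
  | [], _ :: _, _ => by simp
  | _ :: _, [], _ => by simp
  | a :: l₁, b :: l₂, h => by
    simp only [List.forall₂_cons, h a b List.mem_cons_self,
      List.forall₂_congr_of_mem_right (fun a b hb => h a b (List.mem_cons_of_mem _ hb))]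

theorem evalLinList_eq_map {n : ℕ} (σ : Fin n → UVal) (es : List (LinExpr n)) :
    evalLinList σ es = es.map (evalLin σ) := by
  induction es with
  | nil => rfl
  | cons e es ih => simp [evalLinList, ih]

theorem wTagList_eq_map {n : ℕ} (σ : Fin n → UVal) (vs : List UVal) :
    wTagList σ vs = vs.map (wTag σ) := by
  induction vs with
  | nil => rfl
  | cons v vs ih => simp [wTagList, ih]

theorem ellMem_node_var_iff {n c : ℕ} {i : Fin n} {A : Finset (Option (Fin n))}
    {ws : List (TaggedTree n)} : EllMem (.var i) (.node c A ws) ↔ some i ∈ A :=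
  ⟨fun | .var hi => hi, .var⟩

theorem ellMem_node_cons_iff {n c c' : ℕ} {es : List (LinExpr n)} {A : Finset (Option (Fin n))}
    {ws : List (TaggedTree n)} :
    EllMem (.cons c' es) (.node c A ws) ↔ c' = c ∧ none ∈ A ∧ List.Forall₂ EllMem es ws := by
  constructor
  · rintro (_ | ⟨hc, hes⟩)
    exact ⟨rfl, hc, hes⟩
  · rintro ⟨rfl, hc, hes⟩
    exact .cons hc hes

theorem ellMem_wTag_iff {n : ℕ} (σ : Fin n → UVal) :
    ∀ (v : UVal) (e : LinExpr n), EllMem e (wTag σ v) ↔ evalLin σ e = v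
  | .node c vs, .var i => by
    classical
    simp [wTag, ellMem_node_var_iff, evalLin]
  | .node c vs, .cons c' es => by
    have ih : ∀ e, ∀ v ∈ vs, (EllMem e (wTag σ v) ↔ evalLin σ e = v) :=
      fun e v _ => ellMem_wTag_iff σ v e
    rw [wTag, ellMem_node_cons_iff, evalLin, wTagList_eq_map, evalLinList_eq_map,
      List.forall₂_map_right_iff, List.forall₂_congr_of_mem_right ih]
    simp [← List.forall₂_eq_eq_eq]
termination_by v => v

/-- For any evaluation context `σ` and any untagged value `v`, the set `ℓ(w(σ, v))`
is exactly the set of linear expressions that evaluate to `v` in the context `σ`. -/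
theorem ell_wTag {n : ℕ} (σ : Fin n → UVal) (v : UVal) :
    ell (wTag σ v) = {e : LinExpr n | evalLin σ e = v} :=
  Set.ext (ellMem_wTag_iff σ v)
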